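/- The radarization map Rad_v maps the time axis bijectively onto the time axis: for x ∈ ℝ⁴, the spatial part of x is zero if and only if the spatial part of Rad_v(x) is zero; moreover Rad_v scales the time axis by the factor √(1 - |v|²/c²). -/

import Mathlib

/-!
`R_v` is an orthogonal matrix fixing the time axis pointwise, so for `M = R_v` and `M = R_v⁻¹`
the vector `M x` lies on the time axis exactly when `x` does. Between them,
`√(1 - w²/c²) • E_w ∘ G_w` sends `(t, 0, 0, 0)` to `(√(1 - w²/c²) t, 0, 0, 0)` and acts on the
spatial coordinates by `(y₁, y₂, y₃) ↦ (y₁ / √(1 - w²/c²), y₂, y₃)`, which vanishes exactly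
when `(y₁, y₂, y₃)` does.
-/

noncomputable section
open Classical

/-- Euclidean norm of a velocity vector in `ℝ³`. -/
def nv (v : Fin 3 → ℝ) : ℝ := Real.sqrt ((v 0)^2 + (v 1)^2 + (v 2)^2)

/-- The rotation matrix used when `v_y ≠ 0` or `v_z ≠ 0`. -/
def rotMatrix (vx vy vz : ℝ) : Matrix (Fin 4) (Fin 4) ℝ :=
  (Real.sqrt (vx^2 + vy^2 + vz^2))⁻¹ •
    ![![Real.sqrt (vx^2 + vy^2 + vz^2), 0, 0, 0],
      ![0, -vx, -vy, -vz],
      ![0, vy, -vx - vz^2 * (Real.sqrt (vx^2 + vy^2 + vz^2) - vx) / (vy^2 + vz^2),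
        vy * vz * (Real.sqrt (vx^2 + vy^2 + vz^2) - vx) / (vy^2 + vz^2)],
      ![0, vz, vy * vz * (Real.sqrt (vx^2 + vy^2 + vz^2) - vx) / (vy^2 + vz^2),
        -vx - vy^2 * (Real.sqrt (vx^2 + vy^2 + vz^2) - vx) / (vy^2 + vz^2)]]

/-- The spatial rotation `R_v` taking direction `(1, v)` to `(1, -|v|, 0, 0)`. -/
def Rv (v : Fin 3 → ℝ) : Matrix (Fin 4) (Fin 4) ℝ :=
  if v 1 ≠ 0 ∨ v 2 ≠ 0 then rotMatrix (v 0) (v 1) (v 2)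
  else if 0 < v 0 then
    ![![1, 0, 0, 0], ![0, -1, 0, 0], ![0, 0, -1, 0], ![0, 0, 0, -1]]
  else 1

/-- The Galilean boost `G_w : (t,x,y,z) ↦ (t, x + wt, y, z)`. -/
def galBoost (w : ℝ) (x : Fin 4 → ℝ) : Fin 4 → ℝ :=
  ![x 0, x 1 + w * x 0, x 2, x 3]

/-- The Poincaré–Einstein synchronisation matrix `E_w`. -/
def Emat (c w : ℝ) : Matrix (Fin 4) (Fin 4) ℝ :=
  ![![1 / (1 - w^2/c^2), (-w/c^2) / (1 - w^2/c^2), 0, 0],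
    ![-w / (1 - w^2/c^2), 1 / (1 - w^2/c^2), 0, 0],
    ![0, 0, 1 / Real.sqrt (1 - w^2/c^2), 0],
    ![0, 0, 0, 1 / Real.sqrt (1 - w^2/c^2)]]

/-- The radarization map `Rad_v = R_v⁻¹ ∘ S_{|v|} ∘ E_{|v|} ∘ G_{|v|} ∘ R_v`. -/
def rad (c : ℝ) (v : Fin 3 → ℝ) (x : Fin 4 → ℝ) : Fin 4 → ℝ :=
  (Rv v)⁻¹.mulVec (Real.sqrt (1 - (nv v)^2/c^2) •
    (Emat c (nv v)).mulVec (galBoost (nv v) ((Rv v).mulVec x)))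

open Matrix

def timeAxis : Set (Fin 4 → ℝ) := {x | x 1 = 0 ∧ x 2 = 0 ∧ x 3 = 0}

lemma vecCons_mem_timeAxis (t : ℝ) : ![t, 0, 0, 0] ∈ timeAxis := ⟨rfl, rfl, rfl⟩

lemma eq_of_mem_timeAxis {x : Fin 4 → ℝ} (hx : x ∈ timeAxis) : x = ![x 0, 0, 0, 0] := by
  obtain ⟨h1, h2, h3⟩ := hx
  funext i
  fin_cases i <;> simp [h1, h2, h3]

def FixesTimeAxis (M : Matrix (Fin 4) (Fin 4) ℝ) : Prop :=
  ∀ t : ℝ, M *ᵥ ![t, 0, 0, 0] = ![t, 0, 0, 0]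

namespace FixesTimeAxis

variable {M N : Matrix (Fin 4) (Fin 4) ℝ}

lemma of_mul_eq_one (hM : FixesTimeAxis M) (hNM : N * M = 1) : FixesTimeAxis N := fun t =>
  calc N *ᵥ ![t, 0, 0, 0] = N *ᵥ (M *ᵥ ![t, 0, 0, 0]) := by rw [hM]
    _ = ![t, 0, 0, 0] := by rw [mulVec_mulVec, hNM, one_mulVec]

lemma mulVec_mem_timeAxis_iff (hM : FixesTimeAxis M) (hNM : N * M = 1) {x : Fin 4 → ℝ} :
    M *ᵥ x ∈ timeAxis ↔ x ∈ timeAxis := by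
  refine ⟨fun h => ?_, fun h => ?_⟩
  · have hx : x = N *ᵥ (M *ᵥ x) := by rw [mulVec_mulVec, hNM, one_mulVec]
    rw [hx, eq_of_mem_timeAxis h, hM.of_mul_eq_one hNM]
    exact vecCons_mem_timeAxis _
  · rw [eq_of_mem_timeAxis h, hM]
    exact vecCons_mem_timeAxis _

end FixesTimeAxis

lemma rotMatrix_mul_transpose {vx vy vz : ℝ} (h : 0 < vy ^ 2 + vz ^ 2) :
    rotMatrix vx vy vz * (rotMatrix vx vy vz)ᵀ = 1 := by
  have hn : 0 < vx ^ 2 + vy ^ 2 + vz ^ 2 := by linarith [sq_nonneg vx]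
  ext i j
  simp only [Matrix.mul_apply, Fin.sum_univ_four, Matrix.transpose_apply]
  simp only [rotMatrix]
  set s := Real.sqrt (vx ^ 2 + vy ^ 2 + vz ^ 2)
  have hs : s ^ 2 = vx ^ 2 + vy ^ 2 + vz ^ 2 := Real.sq_sqrt hn.le
  have hs0 : s ≠ 0 := (Real.sqrt_pos.2 hn).ne'
  simp only [mul_div_assoc]
  set r := (s - vx) / (vy ^ 2 + vz ^ 2)
  have hr : (vy ^ 2 + vz ^ 2) * r = s - vx := mul_div_cancel₀ _ h.ne'
  -- `(s + vx) (s - vx) = s² - vx² = vy² + vz²`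
  have hr' : (s + vx) * r = 1 := by
    simp only [r]
    field_simp
    linear_combination hs
  fin_cases i <;> fin_cases j <;> simp [one_apply] <;> field_simp <;> ring_nf
  · linear_combination -hs
  · linear_combination vz ^ 2 * r * hr + vz ^ 2 * hr' - hs
  · linear_combination -vy * vz * r * hr - vy * vz * hr'
  · linear_combination -vy * vz * r * hr - vy * vz * hr'
  · linear_combination vy ^ 2 * r * hr + vy ^ 2 * hr' - hs

lemma rotMatrix_fixesTimeAxis {vx vy vz : ℝ} (h : vx ^ 2 + vy ^ 2 + vz ^ 2 ≠ 0) :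
    FixesTimeAxis (rotMatrix vx vy vz) := by
  have hs0 : Real.sqrt (vx ^ 2 + vy ^ 2 + vz ^ 2) ≠ 0 :=
    (Real.sqrt_pos.2 (lt_of_le_of_ne (by positivity) h.symm)).ne'
  intro t
  funext i
  fin_cases i <;> simp [rotMatrix, Matrix.mulVec, dotProduct, Fin.sum_univ_four, hs0]

lemma Rv_mul_transpose (v : Fin 3 → ℝ) : Rv v * (Rv v)ᵀ = 1 := by
  unfold Rv
  split_ifs with h h0
  · exact rotMatrix_mul_transpose (by rcases h with h | h <;> positivity)
  · ext i j
    simp only [Matrix.mul_apply, Fin.sum_univ_four, Matrix.transpose_apply]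
    fin_cases i <;> fin_cases j <;> simp [h0, one_apply]
  · simp [h0]

lemma Rv_fixesTimeAxis (v : Fin 3 → ℝ) : FixesTimeAxis (Rv v) := by
  unfold Rv
  split_ifs with h h0
  · exact rotMatrix_fixesTimeAxis (by rcases h with h | h <;> positivity)
  · intro t
    funext i
    fin_cases i <;> simp [h0, Matrix.mulVec, dotProduct, Fin.sum_univ_four]
  · intro t
    simp [h0]

lemma isUnit_det_Rv (v : Fin 3 → ℝ) : IsUnit (Rv v).det :=
  isUnit_det_of_right_inverse (Rv_mul_transpose v)

def coreMap (c w : ℝ) (y : Fin 4 → ℝ) : Fin 4 → ℝ :=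
  Real.sqrt (1 - w ^ 2 / c ^ 2) • (Emat c w) *ᵥ galBoost w y

lemma rad_eq_inv_mulVec_coreMap (c : ℝ) (v : Fin 3 → ℝ) (x : Fin 4 → ℝ) :
    rad c v x = (Rv v)⁻¹ *ᵥ coreMap c (nv v) (Rv v *ᵥ x) := rfl

lemma coreMap_apply {c w : ℝ} (hd : 0 < 1 - w ^ 2 / c ^ 2) (y : Fin 4 → ℝ) :
    coreMap c w y = ![Real.sqrt (1 - w ^ 2 / c ^ 2) * y 0
        - w / c ^ 2 / Real.sqrt (1 - w ^ 2 / c ^ 2) * y 1,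
      y 1 / Real.sqrt (1 - w ^ 2 / c ^ 2), y 2, y 3] := by
  have hs : Real.sqrt (1 - w ^ 2 / c ^ 2) ^ 2 = 1 - w ^ 2 / c ^ 2 := Real.sq_sqrt hd.le
  have hs0 : Real.sqrt (1 - w ^ 2 / c ^ 2) ≠ 0 := (Real.sqrt_pos.2 hd).ne'
  funext i
  fin_cases i
    <;> simp [coreMap, Emat, galBoost, Matrix.mulVec, dotProduct, Fin.sum_univ_four, neg_div]
    <;> generalize Real.sqrt (1 - w ^ 2 / c ^ 2) = s at hs hs0 ⊢ <;> field_simp [← hs]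
  · linear_combination -(w * y 1 / c ^ 2) * hs
  · linear_combination y 1 * hs

lemma coreMap_vecCons {c w : ℝ} (hd : 0 < 1 - w ^ 2 / c ^ 2) (t : ℝ) :
    coreMap c w ![t, 0, 0, 0] = ![Real.sqrt (1 - w ^ 2 / c ^ 2) * t, 0, 0, 0] := by
  simp [coreMap_apply hd]

lemma coreMap_mem_timeAxis_iff {c w : ℝ} (hd : 0 < 1 - w ^ 2 / c ^ 2) {y : Fin 4 → ℝ} :
    coreMap c w y ∈ timeAxis ↔ y ∈ timeAxis := by
  have hs0 : Real.sqrt (1 - w ^ 2 / c ^ 2) ≠ 0 := (Real.sqrt_pos.2 hd).ne'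
  simp [timeAxis, coreMap_apply hd, hs0]

lemma one_sub_sq_div_sq_pos {c w : ℝ} (hw : 0 ≤ w) (hwc : w < c) : 0 < 1 - w ^ 2 / c ^ 2 := by
  have hc : 0 < c := hw.trans_lt hwc
  rw [sub_pos, div_lt_one (by positivity)]
  exact pow_lt_pow_left₀ hwc hw two_ne_zero

theorem rad_time_axis_general (c : ℝ) (v : Fin 3 → ℝ) (hv : nv v < c) :
    (∀ x : Fin 4 → ℝ,
      (x 1 = 0 ∧ x 2 = 0 ∧ x 3 = 0) ↔
        ((rad c v x) 1 = 0 ∧ (rad c v x) 2 = 0 ∧ (rad c v x) 3 = 0)) ∧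
    (∀ t : ℝ, rad c v ![t, 0, 0, 0]
      = ![Real.sqrt (1 - (nv v)^2/c^2) * t, 0, 0, 0]) := by
  have hd : 0 < 1 - nv v ^ 2 / c ^ 2 := one_sub_sq_div_sq_pos (Real.sqrt_nonneg _) hv
  have hR := Rv_fixesTimeAxis v
  have hRinv : FixesTimeAxis (Rv v)⁻¹ := hR.of_mul_eq_one (nonsing_inv_mul _ (isUnit_det_Rv v))
  refine ⟨fun x => ?_, fun t => ?_⟩
  · change x ∈ timeAxis ↔ rad c v x ∈ timeAxis
    rw [rad_eq_inv_mulVec_coreMap,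
      hRinv.mulVec_mem_timeAxis_iff (mul_nonsing_inv _ (isUnit_det_Rv v)),
      coreMap_mem_timeAxis_iff hd, hR.mulVec_mem_timeAxis_iff (nonsing_inv_mul _ (isUnit_det_Rv v))]
  · rw [rad_eq_inv_mulVec_coreMap, hR, coreMap_vecCons hd, hRinv]

/-- `Rad_v` maps the time axis bijectively onto the time axis and scales it by
the factor `√(1 - |v|²/c²)`. -/
theorem rad_time_axis (c : ℝ) (hc : 0 < c) (v : Fin 3 → ℝ) (hv : nv v < c) :
    (∀ x : Fin 4 → ℝ,
      (x 1 = 0 ∧ x 2 = 0 ∧ x 3 = 0) ↔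
        ((rad c v x) 1 = 0 ∧ (rad c v x) 2 = 0 ∧ (rad c v x) 3 = 0)) ∧
    (∀ t : ℝ, rad c v ![t, 0, 0, 0]
      = ![Real.sqrt (1 - (nv v)^2/c^2) * t, 0, 0, 0]) :=
  rad_time_axis_general c v hv
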